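/- arXiv:math/0410617 — 6 statements merged into one kernel-verified Lean document; each statement's English description precedes it below -/
import Mathlib

section
/- Let p be a prime and G a cyclic group of order p with a fixed generator σ. An F_p[G]-module M is a free F_p[G]-module if and only if M^G = (σ−1)^{p−1}·M, i.e. the submodule of G-fixed elements of M coincides with the image of M under the operator (σ−1)^{p−1} of the group algebra F_p[G]. -/
/-!
Put `t = σ - 1`. In characteristic `p` we have `t ^ p = σ ^ p - 1 = 0`, every group element is
`≡ 1` modulo `t`, so `F_p[G]` is local with maximal ideal `(t)`, and the `G`-fixed vectors of a
module are its `t`-torsion. In `F_p[G]` itself a `t`-torsion element has constant coefficients,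
hence is a multiple of the norm element `t ^ (p - 1)`; working coordinatewise, the same holds in
every free module.

Conversely, suppose `ker t = t ^ (p - 1) M`; then `ker t ^ k = t ^ (p - k) M` for all `k ≤ p`.
Lift an `F_p`-basis of `M / t M` to a family `v` in `M`. Since `t` is nilpotent, `v` spans `M`
(Nakayama). If `∑ gᵢ vᵢ = 0` with all `gᵢ` divisible by `t ^ j`, `j < p`, write `gᵢ = t ^ j hᵢ`;
then `∑ hᵢ vᵢ ∈ ker t ^ j ⊆ t M`, so all `hᵢ` are divisible by `t`; hence all `gᵢ` are divisible
by `t ^ p = 0`.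
-/

open scoped Pointwise
open Finset Polynomial

theorem sub_one_pow_pred_eq_sum_range_pow {R : Type*} [CommRing R] {p : ℕ} [Fact p.Prime]
    [CharP R p] (x : R) : (x - 1) ^ (p - 1) = ∑ i ∈ range p, x ^ i := by
  have h := congrArg (eval x)
    (cyclotomic_mul_prime_eq_pow_of_not_dvd R (n := 1) (Fact.out : p.Prime).not_dvd_one)
  rw [one_mul, cyclotomic_prime, cyclotomic_one] at h
  simpa [eval_finsetSum] using h.symm

theorem Submodule.eq_top_of_sup_smul_top_eq_top {R M : Type*} [CommRing R] [AddCommGroup M]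
    [Module R M] {I : Ideal R} (hI : IsNilpotent I) {N : Submodule R M} (h : N ⊔ I • ⊤ = ⊤) :
    N = ⊤ := by
  obtain ⟨n, hn⟩ := hI
  have key : ∀ k : ℕ, N ⊔ I ^ k • ⊤ = ⊤ := by
    intro k
    induction k with
    | zero => rw [pow_zero, Ideal.one_eq_top, top_smul, sup_top_eq]
    | succ k ih =>
      refine top_le_iff.mp ?_
      calc ⊤ = N ⊔ I ^ k • (N ⊔ I • ⊤) := by rw [h, ih]
        _ ≤ N ⊔ I ^ (k + 1) • ⊤ := by
          rw [smul_sup, pow_succ, mul_smul, ← sup_assoc]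
          exact sup_le_sup_right (sup_le le_rfl smul_le_right) _
  simpa [hn] using key n

section Module

variable {R M : Type*} [CommRing R] [AddCommGroup M] [Module R M] {t : R} {n : ℕ}
  {ι : Type*} {v : ι → M}

theorem exists_pow_smul_eq_of_pow_smul_eq_zero
    (hker : ∀ m : M, t • m = 0 → ∃ y, t ^ n • y = m) {k : ℕ} (hk : k ≤ n + 1) {m : M}
    (hm : t ^ k • m = 0) : ∃ y, t ^ (n + 1 - k) • y = m := by
  induction k generalizing m with
  | zero => exact ⟨0, by rw [smul_zero, ← one_smul R m, ← pow_zero t, hm]⟩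
  | succ k ih =>
    obtain ⟨y, hy⟩ := hker _ (by rwa [smul_smul, ← pow_succ'])
    have hkn : k ≤ n := by omega
    obtain ⟨z, hz⟩ := ih (by omega) (m := m - t ^ (n - k) • y) <| by
      rw [smul_sub, smul_smul, ← pow_add, Nat.add_sub_cancel' hkn, hy, sub_self]
    refine ⟨y + t • z, ?_⟩
    have e : n + 1 - (k + 1) + 1 = n + 1 - k := by omega
    rw [smul_add, smul_smul, ← pow_succ, e, hz, Nat.add_sub_add_right, add_sub_cancel]

theorem mem_smul_top_of_pow_smul_eq_zero (hker : ∀ m : M, t • m = 0 → ∃ y, t ^ n • y = m)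
    {k : ℕ} (hk : k ≤ n) {m : M} (hm : t ^ k • m = 0) : m ∈ t • (⊤ : Submodule R M) := by
  obtain ⟨y, rfl⟩ := exists_pow_smul_eq_of_pow_smul_eq_zero hker (by omega) hm
  rw [Nat.sub_add_comm hk, pow_succ', mul_smul]
  exact Submodule.smul_mem_pointwise_smul _ _ _ trivial

theorem dvd_of_sum_smul_mem_smul_top [Fintype ι]
    (hv : LinearIndependent (R ⧸ Ideal.span {t}) ((t • (⊤ : Submodule R M)).mkQ ∘ v))
    {g : ι → R} (hg : ∑ i, g i • v i ∈ t • (⊤ : Submodule R M)) (i : ι) : t ∣ g i := by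
  rw [← Ideal.mem_span_singleton, ← Ideal.Quotient.eq_zero_iff_mem]
  refine Fintype.linearIndependent_iff.mp hv (fun i ↦ Ideal.Quotient.mk _ (g i)) ?_ i
  have := (Submodule.Quotient.mk_eq_zero _).mpr hg
  rw [← Submodule.mkQ_apply, map_sum] at this
  simpa using this

theorem pow_dvd_of_pow_smul_sum_smul_eq_zero (hker : ∀ m : M, t • m = 0 → ∃ y, t ^ n • y = m)
    [Fintype ι] (hv : LinearIndependent (R ⧸ Ideal.span {t}) ((t • (⊤ : Submodule R M)).mkQ ∘ v))
    {j : ℕ} (hj : j ≤ n + 1) {g : ι → R} (hg : t ^ (n + 1 - j) • ∑ i, g i • v i = 0) (i : ι) :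
    t ^ j ∣ g i := by
  induction j generalizing g with
  | zero => simp
  | succ j ih =>
    choose h hh using dvd_of_sum_smul_mem_smul_top hv
      (mem_smul_top_of_pow_smul_eq_zero hker (k := n - j) (by omega) (by simpa using hg))
    have hsum : t ^ (n + 1 - j) • ∑ i, h i • v i = 0 := by
      rw [Nat.sub_add_comm (by omega), pow_succ, mul_smul, Finset.smul_sum]
      simpa [smul_smul, ← hh] using hg
    rw [hh, pow_succ']
    exact mul_dvd_mul_left t (ih (by omega) hsum)

theorem linearIndependent_of_linearIndependent_mkQ_comp (hnil : t ^ (n + 1) = 0)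
    (hker : ∀ m : M, t • m = 0 → ∃ y, t ^ n • y = m)
    (hv : LinearIndependent (R ⧸ Ideal.span {t}) ((t • (⊤ : Submodule R M)).mkQ ∘ v)) :
    LinearIndependent R v := by
  refine linearIndependent_iff_finset_linearIndependent.mpr fun s ↦ ?_
  refine Fintype.linearIndependent_iff.mpr fun g hg i ↦ ?_
  have := pow_dvd_of_pow_smul_sum_smul_eq_zero hker (hv.comp _ Subtype.val_injective) le_rfl
    (g := g) (by simpa using hg) i
  rwa [hnil, zero_dvd_iff] at this

theorem span_eq_top_of_span_mkQ_comp_eq_top (hnil : IsNilpotent t)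
    (hv : Submodule.span (R ⧸ Ideal.span {t})
      (Set.range ((t • (⊤ : Submodule R M)).mkQ ∘ v)) = ⊤) :
    Submodule.span R (Set.range v) = ⊤ := by
  refine Submodule.eq_top_of_sup_smul_top_eq_top (I := Ideal.span {t}) ?_ ?_
  · obtain ⟨k, hk⟩ := hnil
    exact ⟨k, by rw [Ideal.span_singleton_pow, hk, Ideal.zero_eq_bot, Ideal.span_singleton_eq_bot]⟩
  rw [Submodule.ideal_span_singleton_smul, sup_comm, ← Submodule.map_mkQ_eq_top,
    Submodule.map_span, ← Set.range_comp,
    ← Submodule.restrictScalars_span R (R ⧸ Ideal.span {t}) Ideal.Quotient.mk_surjective]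
  exact congrArg (Submodule.restrictScalars R) hv |>.trans (Submodule.restrictScalars_top ..)

theorem Module.free_of_forall_smul_eq_zero_exists_pow_smul_eq
    (hmax : (Ideal.span {t}).IsMaximal) (hnil : t ^ (n + 1) = 0)
    (hker : ∀ m : M, t • m = 0 → ∃ y, t ^ n • y = m) : Module.Free R M := by
  let _ := Ideal.Quotient.field (Ideal.span {t})
  let b := Module.Basis.ofVectorSpace (R ⧸ Ideal.span {t}) (M ⧸ t • (⊤ : Submodule R M))
  choose v hv using fun i ↦ Submodule.Quotient.mk_surjective _ (b i)
  have hvb : (t • (⊤ : Submodule R M)).mkQ ∘ v = b := funext hv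
  exact .of_basis <|
    .mk (linearIndependent_of_linearIndependent_mkQ_comp hnil hker (hvb ▸ b.linearIndependent))
      (span_eq_top_of_span_mkQ_comp_eq_top ⟨_, hnil⟩ (hvb ▸ b.span_eq)).ge

theorem Module.Free.exists_smul_eq_of_smul_eq_zero [Module.Free R M] {s : R}
    (hann : ∀ c : R, t * c = 0 → ∃ d, s * d = c) {m : M} (hm : t • m = 0) :
    ∃ y, s • y = m := by
  let b := Module.Free.chooseBasis R M
  have hcoord : ∀ i, t * b.repr m i = 0 := fun i ↦ by
    simpa using congrArg (b.repr · i) hm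
  choose d hd using fun i ↦ hann _ (hcoord i)
  refine ⟨∑ i ∈ (b.repr m).support, d i • b i, ?_⟩
  simp_rw [Finset.smul_sum, smul_smul, hd]
  simpa [Finsupp.linearCombination_apply, Finsupp.sum] using b.linearCombination_repr m

theorem Module.free_iff_setOf_smul_eq_zero_eq_range (hmax : (Ideal.span {t}).IsMaximal)
    (hnil : t ^ (n + 1) = 0) (hann : ∀ c : R, t * c = 0 → ∃ d, t ^ n * d = c) :
    Module.Free R M ↔ {m : M | t • m = 0} = Set.range (t ^ n • · : M → M) := by
  have hrange : Set.range (t ^ n • · : M → M) ⊆ {m | t • m = 0} := by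
    rintro _ ⟨y, rfl⟩
    show t • t ^ n • y = 0
    rw [smul_smul, ← pow_succ', hnil, zero_smul]
  refine ⟨fun _ ↦ subset_antisymm (fun m hm ↦ Free.exists_smul_eq_of_smul_eq_zero hann hm) hrange,
    fun h ↦ free_of_forall_smul_eq_zero_exists_pow_smul_eq hmax hnil fun _ hm ↦ h.subset hm⟩

end Module

namespace MonoidAlgebra

variable {k G : Type*}

theorem sub_one_smul_eq_zero_iff [Ring k] [Monoid G] {σ : G}
    (hgen : ∀ g : G, g ∈ Submonoid.powers σ) {M : Type*} [AddCommGroup M] [Module k[G] M]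
    {m : M} : (of k G σ - 1) • m = 0 ↔ ∀ g : G, of k G g • m = m := by
  refine ⟨fun h g ↦ ?_, fun h ↦ by rw [sub_smul, one_smul, h, sub_self]⟩
  rw [sub_smul, one_smul, sub_eq_zero] at h
  obtain ⟨n, rfl⟩ := (Submonoid.mem_powers_iff _ _).mp (hgen g)
  induction n with
  | zero => rw [pow_zero, map_one, one_smul]
  | succ n ih => rw [pow_succ', map_mul, mul_smul, ih, h]

theorem of_sub_one_mem_span_of_sub_one [CommRing k] [CommMonoid G] {σ g : G}
    (hg : g ∈ Submonoid.powers σ) : of k G g - 1 ∈ Ideal.span {of k G σ - 1} := by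
  obtain ⟨n, rfl⟩ := hg
  rw [map_pow, Ideal.mem_span_singleton]
  simpa using sub_dvd_pow_sub_pow (of k G σ) 1 n

theorem isMaximal_span_of_sub_one [Field k] [CommMonoid G] {σ : G}
    (hgen : ∀ g : G, g ∈ Submonoid.powers σ) : (Ideal.span {of k G σ - 1}).IsMaximal := by
  let ε := lift k k G 1
  suffices RingHom.ker ε = Ideal.span {of k G σ - 1} from
    this ▸ RingHom.ker_isMaximal_of_surjective ε fun a ↦ ⟨algebraMap k _ a, ε.commutes a⟩
  refine le_antisymm (fun r hr ↦ ?_) (Ideal.span_le.mpr <| by simp [ε])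
  have hmk : Ideal.Quotient.mkₐ k (Ideal.span {of k G σ - 1}) = (Algebra.ofId k _).comp ε := by
    refine algHom_ext (fun g ↦ ?_) (by ext)
    rw [← of_apply, AlgHom.comp_apply, lift_of, Ideal.Quotient.mkₐ_eq_mk,
      Ideal.Quotient.eq.mpr (of_sub_one_mem_span_of_sub_one (hgen g))]
    simp
  rw [← Ideal.Quotient.eq_zero_iff_mem, ← Ideal.Quotient.mkₐ_eq_mk k, hmk, AlgHom.comp_apply,
    RingHom.mem_ker.mp hr, map_zero]

theorem sub_one_pow_eq_zero [CommRing k] [CommMonoid G] {p : ℕ} [Fact p.Prime] [CharP k p]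
    {σ : G} (hσ : σ ^ p = 1) : (of k G σ - 1) ^ p = 0 := by
  have := charP_of_injective_algebraMap' k (A := k[G]) p
  rw [sub_pow_char, one_pow, ← map_pow, hσ, map_one, sub_self]

theorem coeff_one_sub_one_pow_pred [CommRing k] [CommMonoid G] {p : ℕ} [Fact p.Prime] [CharP k p]
    {σ : G} (hord : orderOf σ = p) : ((of k G σ - 1) ^ (p - 1)).coeff 1 = 1 := by
  classical
  have := charP_of_injective_algebraMap' k (A := k[G]) p
  rw [sub_one_pow_pred_eq_sum_range_pow, coeff_sum, Finset.sum_apply',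
    Finset.sum_eq_single_of_mem 0 (mem_range.mpr (Fact.out : p.Prime).pos)]
  · simp
  · intro i hi hi0
    rw [← map_pow, of_apply, coeff_single, Finsupp.single_apply,
      if_neg (pow_ne_one_of_lt_orderOf hi0 (hord ▸ mem_range.mp hi))]

theorem coeff_eq_coeff_one_of_sub_one_mul_eq_zero [Ring k] [Group G] {σ : G}
    (hgen : ∀ g : G, g ∈ Submonoid.powers σ) {c : k[G]} (hc : (of k G σ - 1) * c = 0) (g : G) :
    c.coeff g = c.coeff 1 := by
  have := (sub_one_smul_eq_zero_iff (k := k) hgen (M := k[G])).mp hc g⁻¹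
  rw [smul_eq_mul, of_apply] at this
  simpa using congrArg (·.coeff 1) this

theorem exists_sub_one_pow_mul_eq_of_sub_one_mul_eq_zero [CommRing k] [CommGroup G] {p : ℕ}
    [Fact p.Prime] [CharP k p] {σ : G} (hord : orderOf σ = p)
    (hgen : ∀ g : G, g ∈ Submonoid.powers σ) {c : k[G]} (hc : (of k G σ - 1) * c = 0) :
    ∃ d, (of k G σ - 1) ^ (p - 1) * d = c := by
  set t := of k G σ - 1
  -- `c` is `σ`-invariant, so its coefficients are all equal to `c 1`, and so are those of
  -- `e = c - t ^ (p - 1) * c 1`, whose coefficient at `1` vanishes.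
  refine ⟨single 1 (c.coeff 1), (sub_eq_zero.mp ?_).symm⟩
  set e := c - t ^ (p - 1) * single 1 (c.coeff 1)
  have hte : t * e = 0 := by
    rw [mul_sub, hc, ← mul_assoc, ← pow_succ', Nat.sub_add_cancel (Fact.out : p.Prime).pos,
      sub_one_pow_eq_zero (hord ▸ pow_orderOf_eq_one σ), zero_mul, sub_self]
  have he1 : e.coeff 1 = 0 := by
    rw [coeff_sub, Finsupp.sub_apply, coeff_mul_single_apply, inv_one, mul_one,
      coeff_one_sub_one_pow_pred hord, one_mul, sub_self]
  ext g
  rw [coeff_eq_coeff_one_of_sub_one_mul_eq_zero hgen hte, he1, coeff_zero, Finsupp.zero_apply]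

end MonoidAlgebra

/-- Let `p` be a prime and `G` a cyclic group of order `p` with a fixed
generator `σ`.  An `F_p[G]`-module `M` is free if and only if the submodule of `G`-fixed
elements of `M` coincides with the image of `M` under the operator `(σ - 1)^(p-1)` of the
group algebra `F_p[G]`. -/
theorem free_iff_fixed_eq_image_of_norm_operator
    {p : ℕ} (hp : p.Prime) {G : Type*} [Group G] (σ : G)
    (hord : orderOf σ = p) (hgen : ∀ g : G, g ∈ Subgroup.zpowers σ)
    {M : Type*} [AddCommGroup M] [Module (MonoidAlgebra (ZMod p) G) M] :
    Module.Free (MonoidAlgebra (ZMod p) G) M ↔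
      {m : M | ∀ g : G, MonoidAlgebra.of (ZMod p) G g • m = m} =
        Set.range (fun m : M => ((MonoidAlgebra.of (ZMod p) G σ - 1) ^ (p - 1)) • m) := by
  have := Fact.mk hp
  have hpow : ∀ g : G, g ∈ Submonoid.powers σ := fun g ↦
    (IsOfFinOrder.mem_powers_iff_mem_zpowers (orderOf_pos_iff.mp (hord ▸ hp.pos))).mpr (hgen g)
  have hfix : {m : M | ∀ g : G, MonoidAlgebra.of (ZMod p) G g • m = m} =
      {m | (MonoidAlgebra.of (ZMod p) G σ - 1) • m = 0} :=
    Set.ext fun _ ↦ (MonoidAlgebra.sub_one_smul_eq_zero_iff hpow).symm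
  rw [hfix]
  have : IsCyclic G := ⟨⟨σ, hgen⟩⟩
  let _ : CommGroup G := IsCyclic.commGroup
  refine Module.free_iff_setOf_smul_eq_zero_eq_range (n := p - 1)
    (MonoidAlgebra.isMaximal_span_of_sub_one hpow) ?_
    fun _ hc ↦ MonoidAlgebra.exists_sub_one_pow_mul_eq_of_sub_one_mul_eq_zero hord hpow hc
  rw [Nat.sub_add_cancel hp.pos]
  exact MonoidAlgebra.sub_one_pow_eq_zero (hord ▸ pow_orderOf_eq_one σ)
end

section
/- Let p be an odd prime, F a field containing a primitive p-th root of unity, a ∈ F^× not a p-th power in F, E = F(α) where α^p = a, and G = Gal(E/F), a cyclic group of order p. Then the F_p[G]-module E^×/E^{×p} is NOT a free F_p[G]-module. (In the paper's notation: for p > 2, H^1(E) is never a free F_p[Gal(E/F)]-module.) -/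
noncomputable section

/-- The subgroup of `p`-th powers in the multiplicative group of units of a field `E`. -/
def pthPowers (E : Type*) [Field E] (p : ℕ) : Subgroup Eˣ :=
  (powMonoidHom p : Eˣ →* Eˣ).range

/-- The group `E^× / E^{×p}`, written additively. -/
abbrev KModP (E : Type*) [Field E] (p : ℕ) : Type _ :=
  Additive (Eˣ ⧸ pthPowers E p)

instance kModPModule (E : Type*) [Field E] (p : ℕ) : Module (ZMod p) (KModP E p) :=
  AddCommGroup.zmodModule (n := p) (G := KModP E p) (by
    intro x
    induction x using Additive.rec with
    | _ q =>
      induction q using QuotientGroup.induction_on with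
      | _ u =>
        rw [← ofMul_pow, ← QuotientGroup.mk_pow, show ((QuotientGroup.mk (u ^ p) :
          Eˣ ⧸ pthPowers E p)) = 1 from (QuotientGroup.eq_one_iff _).2 ⟨u, rfl⟩]
        rfl)

/-- The action of the Galois group on `E^×/E^{×p}` as a representation over `ZMod p`. -/
def galRep (F E : Type*) [Field F] [Field E] [Algebra F E] (p : ℕ) :
    Representation (ZMod p) (E ≃ₐ[F] E) (KModP E p) where
  toFun σ :=
    AddMonoidHom.toZModLinearMap p <| MonoidHom.toAdditive <|
      QuotientGroup.map (pthPowers E p) (pthPowers E p)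
        (Units.map (σ : E →* E))
        (by rintro x ⟨u, rfl⟩
            exact ⟨Units.map (σ : E →* E) u, by simp [powMonoidHom, map_pow]⟩)
  map_one' := by
    ext x
    induction x using Additive.rec with
    | _ q =>
      induction q using QuotientGroup.induction_on with
      | _ u => rfl
  map_mul' := fun σ τ => by
    ext x
    induction x using Additive.rec with
    | _ q =>
      induction q using QuotientGroup.induction_on with
      | _ u => rfl


/-! If `E^×/E^{×p}` were free over `𝔽_p[G]`, where `G = ⟨σ⟩` is cyclic, the kernel of the norm
element `N = ∑ g` would be the image of `σ - 1`, as it is on `𝔽_p[G]` itself. For odd `p` the field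
norm of `α` is `a = α ^ p`, so `N` kills the class of `α`. Writing `α = σ(u) / u · y ^ p` and taking
field norms then gives `a = N(y) ^ p`, contradicting that `a` is not a `p`-th power. -/

open Polynomial

namespace MonoidAlgebra

variable {k G : Type*} [CommRing k]

lemma exists_eq_smul_one_add_sub_one_mul [Monoid G] {σ : G}
    (hσ : ∀ g, g ∈ Submonoid.powers σ) (r : MonoidAlgebra k G) :
    ∃ (c : k) (d : MonoidAlgebra k G), r = c • 1 + (single σ 1 - 1) * d := by
  induction r using MonoidAlgebra.induction_linear with
  | zero => exact ⟨0, 0, by simp⟩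
  | add r s hr hs =>
    obtain ⟨c, d, rfl⟩ := hr
    obtain ⟨c', d', rfl⟩ := hs
    exact ⟨c + c', d + d', by rw [add_smul, mul_add]; abel⟩
  | single g c =>
    obtain ⟨n, rfl⟩ := hσ g
    refine ⟨c, c • ∑ i ∈ Finset.range n, single σ 1 ^ i, ?_⟩
    rw [mul_smul_comm, mul_geom_sum, smul_sub, add_sub_cancel, single_pow, one_pow,
      smul_single, smul_eq_mul, mul_one]

variable [Group G] [Fintype G]

lemma sum_single_one_mul_single_one (h : G) :
    (∑ g : G, single g (1 : k)) * single h 1 = ∑ g : G, single g 1 := by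
  simp only [Finset.sum_mul, single_mul_single, mul_one]
  exact Fintype.sum_equiv (Equiv.mulRight h) _ _ fun _ ↦ rfl

lemma eq_zero_of_smul_sum_single_one_eq_zero {c : k}
    (hc : c • ∑ g : G, single g (1 : k) = 0) : c = 0 := by
  simpa [Finset.smul_sum, coeff_sum, coeff_single, Finsupp.single_apply] using
    congr_arg (fun x : MonoidAlgebra k G ↦ x.coeff 1) hc

lemma exists_eq_sub_one_mul_of_sum_single_one_mul_eq_zero {σ : G}
    (hσ : ∀ g, g ∈ Submonoid.powers σ) {r : MonoidAlgebra k G}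
    (hr : (∑ g : G, single g (1 : k)) * r = 0) :
    ∃ d, r = (single σ 1 - 1) * d := by
  obtain ⟨c, d, rfl⟩ := exists_eq_smul_one_add_sub_one_mul hσ r
  have hN : (∑ g : G, single g (1 : k)) * (single σ 1 - 1) = 0 := by
    rw [mul_sub, mul_one, sum_single_one_mul_single_one, sub_self]
  rw [mul_add, mul_smul_comm, mul_one, ← mul_assoc, hN, zero_mul, add_zero] at hr
  exact ⟨d, by rw [eq_zero_of_smul_sum_single_one_eq_zero hr, zero_smul, zero_add]⟩

lemma exists_eq_sub_one_smul_of_sum_single_one_smul_eq_zero {σ : G}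
    (hσ : ∀ g, g ∈ Submonoid.powers σ) {M : Type*} [AddCommGroup M]
    [Module (MonoidAlgebra k G) M] [Module.Free (MonoidAlgebra k G) M] {m : M}
    (hm : (∑ g : G, single g (1 : k)) • m = 0) :
    ∃ x : M, m = (single σ (1 : k) - 1) • x := by
  let b := Module.Free.chooseBasis (MonoidAlgebra k G) M
  have hcoord (i) : (∑ g : G, single g (1 : k)) * b.repr m i = 0 := by
    simpa using congr_arg (b.repr · i) hm
  choose d hd using fun i ↦ exists_eq_sub_one_mul_of_sum_single_one_mul_eq_zero hσ (hcoord i)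
  refine ⟨∑ i ∈ (b.repr m).support, d i • b i, ?_⟩
  conv_lhs => rw [← b.linearCombination_repr m]
  rw [Finsupp.linearCombination_apply, Finsupp.sum, Finset.smul_sum]
  exact Finset.sum_congr rfl fun i _ ↦ by rw [smul_smul, ← hd]

end MonoidAlgebra

namespace Representation

variable {k G V : Type*} [CommRing k] [Group G] [Fintype G] [AddCommGroup V] [Module k V]
  (ρ : Representation k G V)

lemma asAlgebraHom_sum_single_one : ρ.asAlgebraHom (∑ g : G, .single g 1) = ρ.norm := by
  simp [norm]

lemma exists_eq_sub_of_norm_eq_zero [Module.Free (MonoidAlgebra k G) ρ.asModule] {σ : G}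
    (hσ : ∀ g, g ∈ Submonoid.powers σ) {v : V} (hv : ρ.norm v = 0) :
    ∃ w, v = ρ σ w - w := by
  let e := ρ.asModuleEquiv
  have hN : (∑ g : G, MonoidAlgebra.single g (1 : k)) • e.symm v = 0 :=
    e.injective <| by rw [asModuleEquiv_map_smul, asAlgebraHom_sum_single_one,
      e.apply_symm_apply, hv, map_zero]
  obtain ⟨x, hx⟩ := MonoidAlgebra.exists_eq_sub_one_smul_of_sum_single_one_smul_eq_zero hσ hN
  refine ⟨e x, ?_⟩
  rw [← e.apply_symm_apply v, hx, sub_smul, one_smul, map_sub, asModuleEquiv_map_smul,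
    asAlgebraHom_single_one]

end Representation

section Kummer

variable {F E : Type*} [Field F] [Field E] [Algebra F E] {n : ℕ} {a : F} {α : E}

lemma isSplittingField_X_pow_sub_C_of_adjoin_eq_top [NeZero n] {ζ : F}
    (hζ : IsPrimitiveRoot ζ n) (hα : α ^ n = algebraMap F E a)
    (hadj : Algebra.adjoin F {α} = ⊤) : IsSplittingField F E (X ^ n - C a) := by
  constructor
  · rw [Polynomial.map_sub, Polynomial.map_pow, Polynomial.map_C, Polynomial.map_X]
    exact X_pow_sub_C_splits_of_isPrimitiveRoot
      (hζ.map_of_injective (algebraMap F E).injective) hα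
  · rw [eq_top_iff, ← hadj]
    apply Algebra.adjoin_mono
    rw [Set.singleton_subset_iff, mem_rootSet_of_ne (X_pow_sub_C_ne_zero (NeZero.pos n) a),
      aeval_def, eval₂_sub, eval₂_X_pow, eval₂_C, hα, sub_self]

lemma Algebra.norm_eq_of_pow_eq_of_adjoin_eq_top (hn : Odd n)
    (hirr : Irreducible (X ^ n - C a)) (hα : α ^ n = algebraMap F E a)
    (hadj : Algebra.adjoin F {α} = ⊤) : Algebra.norm F α = a := by
  have hroot : aeval α (X ^ n - C a) = 0 := by simp [hα]
  have hmon := monic_X_pow_sub_C a hn.pos.ne'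
  have hmin : minpoly F α = X ^ n - C a :=
    (minpoly.eq_of_irreducible_of_monic hirr hroot hmon).symm
  have h : Algebra.norm F α = (-1) ^ (minpoly F α).natDegree * (minpoly F α).coeff 0 :=
    Algebra.PowerBasis.norm_gen_eq_coeff_zero_minpoly
      (PowerBasis.ofAdjoinEqTop ⟨_, hmon, hroot⟩ hadj)
  simp [h, hmin, hn.neg_one_pow, hn.pos.ne]

end Kummer

section galRep

variable {F E : Type*} [Field F] [Field E] [Algebra F E] {p : ℕ}

lemma galRep_norm_ofMul_mk_eq_zero [FiniteDimensional F E] [IsGalois F E] {u v : Eˣ}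
    (h : algebraMap F E (Algebra.norm F (u : E)) = v ^ p) :
    (galRep F E p).norm (.ofMul (u : Eˣ ⧸ pthPowers E p)) = 0 := by
  have hprod : ∏ σ : E ≃ₐ[F] E, Units.map (σ : E →* E) u = v ^ p := by
    ext
    simp [← h, Algebra.norm_eq_prod_automorphisms]
  rw [Representation.norm, LinearMap.sum_apply]
  change ∑ σ : E ≃ₐ[F] E,
    Additive.ofMul ((Units.map (σ : E →* E) u : Eˣ) : Eˣ ⧸ pthPowers E p) = 0
  rw [← ofMul_prod, ← QuotientGroup.mk_prod, hprod,
    (QuotientGroup.eq_one_iff (N := pthPowers E p) (v ^ p)).2 ⟨v, rfl⟩, ofMul_one]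

lemma exists_pow_eq_norm_of_ofMul_mk_eq_sub (σ : E ≃ₐ[F] E) {v : Eˣ} {w : KModP E p}
    (h : .ofMul (v : Eˣ ⧸ pthPowers E p) = galRep F E p σ w - w) :
    ∃ f : F, f ^ p = Algebra.norm F (v : E) := by
  obtain ⟨u, rfl⟩ := QuotientGroup.mk_surjective (Additive.toMul w)
  obtain ⟨y, hy⟩ := (QuotientGroup.eq (s := pthPowers E p) (a := v)
    (b := Units.map (σ : E →* E) u / u)).1 (Additive.ofMul.injective h)
  let normU : Eˣ →* Fˣ := Units.map (Algebra.norm F)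
  have hσu : normU (Units.map (σ : E →* E) u) = normU u :=
    Units.ext (Algebra.norm_eq_of_algEquiv σ (u : E))
  have hyv : normU y ^ p = (normU v)⁻¹ := by
    simpa [← map_pow, hσu] using congr_arg normU hy
  exact ⟨((normU y)⁻¹ : Fˣ), by rw [← Units.val_pow_eq_pow_val, inv_pow, hyv, inv_inv]; rfl⟩

end galRep

/-- Let `p` be an odd prime, `F` a field containing a primitive `p`-th root
of unity, `a ∈ F^×` not a `p`-th power in `F`, `E = F(α)` where `α^p = a`, and
`G = Gal(E/F)`.  Then the `F_p[G]`-module `E^×/E^{×p}` is NOT a free `F_p[G]`-module. -/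
theorem h1_not_free_of_odd_prime
    {p : ℕ} (hp : p.Prime) (hodd : Odd p)
    {F E : Type*} [Field F] [Field E] [Algebra F E]
    (ζ : F) (hζ : IsPrimitiveRoot ζ p)
    (a : F) (ha : a ≠ 0) (hnp : ∀ f : F, f ^ p ≠ a)
    (α : E) (hα : α ^ p = algebraMap F E a)
    (hgenα : Algebra.adjoin F {α} = ⊤) :
    ¬ Module.Free (MonoidAlgebra (ZMod p) (E ≃ₐ[F] E)) (galRep F E p).asModule := by
  intro hfree
  have : NeZero p := ⟨hp.ne_zero⟩
  have hirr := X_pow_sub_C_irreducible_of_prime hp hnp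
  have hζ' : (primitiveRoots p F).Nonempty := ⟨ζ, (mem_primitiveRoots hp.pos).2 hζ⟩
  have := isSplittingField_X_pow_sub_C_of_adjoin_eq_top hζ hα hgenα
  have := IsSplittingField.finiteDimensional E (X ^ p - C a)
  have := isGalois_of_isSplittingField_X_pow_sub_C hζ' hirr E
  obtain ⟨σ, hσ⟩ := isCyclic_of_isSplittingField_X_pow_sub_C hζ' hirr E
  have hnorm := Algebra.norm_eq_of_pow_eq_of_adjoin_eq_top hodd hirr hα hgenα
  have hα0 : α ≠ 0 := fun h ↦ ha <| by simpa [h, hp.ne_zero] using hα.symm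
  obtain ⟨w, hw⟩ := (galRep F E p).exists_eq_sub_of_norm_eq_zero
    (fun g ↦ mem_powers_iff_mem_zpowers.2 (hσ g))
    (galRep_norm_ofMul_mk_eq_zero (u := .mk0 α hα0) (v := .mk0 α hα0) (by simp [hnorm, hα]))
  obtain ⟨f, hf⟩ := exists_pow_eq_norm_of_ofMul_mk_eq_sub σ hw
  exact hnp f (by simpa [hnorm] using hf)
end
end

section
/- Let F be a field of characteristic different from 2, a ∈ F^× a non-square, E = F(√a), σ the nontrivial element of Gal(E/F). Then σ acts trivially on E^×/E^{×2} (i.e. σ(e)/e ∈ E^{×2} for every e ∈ E^×) if and only if either (i) −1 ∈ N_{E/F}(E^×) and N_{E/F}(E^×) ⊆ ⟨a⟩·F^{×2}, or (ii) −a ∈ F^{×2} (so that E = F(√−1)) and F is a Pythagorean field. (This is the paper's explicit characterization, for p = 2 and n = 1, of when H^1(E) is a trivial F_2[Gal(E/F)]-module.) -/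
/-!
Identify `E` with `QuadraticAlgebra F a 0` via `ω ↦ α`; then `N(u + vα) = u² - a v²` and `σ` is
the conjugation `u + vα ↦ u - vα`, so `N(e) = e σ(e)`. Hence `σ(e)/e = N(e)/e²` is a square in `E`
iff `N(e)` is, and (as `2 ≠ 0`) an element of `F^×` is a square in `E` iff it lies in `⟨a⟩·F^{×2}`.
So `σ` acts trivially iff `N(E^×) ⊆ ⟨a⟩·F^{×2}`.

In that case `N(α) = -a` forces `-a = a g²` or `-a = g²`. In the first case `-1 = g² = N(g)`.
In the second, the norms are exactly the nonzero sums of two squares; if `-1` is not a norm, a sum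
of two squares `x² + y² = a g'² = -(g g')²` is impossible, so every sum of two squares is a square.
-/

theorem exists_sq_eq_div_iff {K : Type*} [Field K] {e s : K} (he : e ≠ 0) (hs : s ≠ 0) :
    (∃ u : K, u ≠ 0 ∧ s / e = u ^ 2) ↔ ∃ w : K, w ^ 2 = e * s := by
  constructor
  · rintro ⟨u, -, hu⟩
    exact ⟨e * u, by rw [mul_pow, ← hu]; field_simp⟩
  · rintro ⟨w, hw⟩
    have hw0 : w ≠ 0 := by rintro rfl; simp_all
    exact ⟨w / e, div_ne_zero hw0 he, by rw [div_pow, hw]; field_simp⟩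

namespace AdjoinSqrt

variable {F E : Type*} [Field F] [Field E] [Algebra F E] {a : F} {α : E}

/-- Membership in the subgroup `⟨a⟩·F^{×2}` of `F^×`. -/
def MemPowMulSquares (a f : F) : Prop :=
  ∃ ε : Fin 2, ∃ g : F, g ≠ 0 ∧ f = a ^ (ε : ℕ) * g ^ 2

def sqrtAlgHom (hα : α ^ 2 = algebraMap F E a) : QuadraticAlgebra F a 0 →ₐ[F] E :=
  QuadraticAlgebra.lift ⟨α, by rw [← sq, hα, zero_smul, add_zero, Algebra.algebraMap_eq_smul_one]⟩

@[simp]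
theorem sqrtAlgHom_mk (hα : α ^ 2 = algebraMap F E a) (u v : F) :
    sqrtAlgHom hα ⟨u, v⟩ = algebraMap F E u + algebraMap F E v * α := by
  simp [sqrtAlgHom, Algebra.smul_def]

theorem sqrtAlgHom_bijective (hα : α ^ 2 = algebraMap F E a) (hns : ∀ f : F, f ^ 2 ≠ a)
    (hgen : Algebra.adjoin F {α} = ⊤) : Function.Bijective (sqrtAlgHom hα) := by
  -- makes `QuadraticAlgebra F a 0` a field, so `sqrtAlgHom hα` is injective
  have : Fact (∀ r : F, r ^ 2 ≠ a + 0 * r) := ⟨by simpa using hns⟩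
  refine ⟨(sqrtAlgHom hα).injective, ?_⟩
  rw [← AlgHom.range_eq_top, eq_top_iff, ← hgen, Algebra.adjoin_le_iff, Set.singleton_subset_iff]
  exact ⟨⟨0, 1⟩, by simp⟩

theorem norm_sqrtAlgHom (hα : α ^ 2 = algebraMap F E a) (hns : ∀ f : F, f ^ 2 ≠ a)
    (hgen : Algebra.adjoin F {α} = ⊤) (z : QuadraticAlgebra F a 0) :
    Algebra.norm F (sqrtAlgHom hα z) = z.norm := by
  rw [← AlgEquiv.ofBijective_apply _ (sqrtAlgHom_bijective hα hns hgen),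
    Algebra.norm_eq_of_algEquiv]
  exact QuadraticAlgebra.det_toLinearMap_eq_norm z

theorem norm_eq_zero_iff (hα : α ^ 2 = algebraMap F E a) (hns : ∀ f : F, f ^ 2 ≠ a)
    (hgen : Algebra.adjoin F {α} = ⊤) {e : E} : Algebra.norm F e = 0 ↔ e = 0 := by
  have : Fact (∀ r : F, r ^ 2 ≠ a + 0 * r) := ⟨by simpa using hns⟩
  obtain ⟨z, rfl⟩ := (sqrtAlgHom_bijective hα hns hgen).2 e
  rw [norm_sqrtAlgHom hα hns hgen, QuadraticAlgebra.norm_eq_zero_iff_eq_zero, map_eq_zero_iff _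
    (sqrtAlgHom_bijective hα hns hgen).1]

theorem apply_eq_neg_of_ne_one (hα : α ^ 2 = algebraMap F E a)
    (hgen : Algebra.adjoin F {α} = ⊤) {σ : E ≃ₐ[F] E} (hσ : σ ≠ 1) : σ α = -α := by
  have hsq : σ α ^ 2 = α ^ 2 := by rw [← map_pow, hα, AlgEquiv.commutes]
  refine (sq_eq_sq_iff_eq_or_eq_neg.mp hsq).resolve_left fun hfix => hσ ?_
  exact AlgEquiv.coe_toAlgHom_injective
    (AlgHom.ext_of_adjoin_eq_top hgen (Set.eqOn_singleton.mpr hfix))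

theorem algebraMap_norm_eq_mul_apply (hα : α ^ 2 = algebraMap F E a)
    (hns : ∀ f : F, f ^ 2 ≠ a) (hgen : Algebra.adjoin F {α} = ⊤) {σ : E ≃ₐ[F] E} (hσ : σ ≠ 1)
    (e : E) : algebraMap F E (Algebra.norm F e) = e * σ e := by
  obtain ⟨z, rfl⟩ := (sqrtAlgHom_bijective hα hns hgen).2 e
  have hstar : sqrtAlgHom hα (star z) = σ (sqrtAlgHom hα z) := by
    obtain ⟨u, v⟩ := z
    simp [QuadraticAlgebra.star_mk, apply_eq_neg_of_ne_one hα hgen hσ]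
  rw [norm_sqrtAlgHom hα hns hgen, ← hstar, ← map_mul,
    ← QuadraticAlgebra.algebraMap_norm_eq_mul_star, AlgHom.commutes]

theorem exists_sq_eq_algebraMap_iff (hchar : (2 : F) ≠ 0) (hα : α ^ 2 = algebraMap F E a)
    (hns : ∀ f : F, f ^ 2 ≠ a) (hgen : Algebra.adjoin F {α} = ⊤) {f : F} (hf : f ≠ 0) :
    (∃ w : E, w ^ 2 = algebraMap F E f) ↔ MemPowMulSquares a f := by
  constructor
  · rintro ⟨w, hw⟩
    obtain ⟨z, rfl⟩ := (sqrtAlgHom_bijective hα hns hgen).2 w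
    have hz : z ^ 2 = algebraMap F _ f :=
      (sqrtAlgHom_bijective hα hns hgen).1 (by rw [map_pow, hw, AlgHom.commutes])
    have hre : f = z.re ^ 2 + a * z.im ^ 2 := by
      simpa [sq, mul_assoc] using (congrArg QuadraticAlgebra.re hz).symm
    have him : 2 * (z.re * z.im) = 0 := by
      have := congrArg QuadraticAlgebra.im hz
      simp only [sq, QuadraticAlgebra.im_mul, QuadraticAlgebra.algebraMap_im] at this
      linear_combination this
    rcases mul_eq_zero.1 ((mul_eq_zero.1 him).resolve_left hchar) with hre0 | him0
    · exact ⟨1, z.im, by rintro h; simp_all, by simp [hre, hre0]⟩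
    · exact ⟨0, z.re, by rintro h; simp_all, by simp [hre, him0]⟩
  · rintro ⟨ε, g, -, rfl⟩
    fin_cases ε
    · exact ⟨algebraMap F E g, by simp⟩
    · exact ⟨α * algebraMap F E g, by simp [mul_pow, hα]⟩

theorem forall_exists_sq_eq_apply_div_self_iff (hchar : (2 : F) ≠ 0)
    (hα : α ^ 2 = algebraMap F E a) (hns : ∀ f : F, f ^ 2 ≠ a) (hgen : Algebra.adjoin F {α} = ⊤)
    {σ : E ≃ₐ[F] E} (hσ : σ ≠ 1) :
    (∀ e : E, e ≠ 0 → ∃ u : E, u ≠ 0 ∧ σ e / e = u ^ 2) ↔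
      ∀ e : E, e ≠ 0 → MemPowMulSquares a (Algebra.norm F e) := by
  refine forall₂_congr fun e he => ?_
  have hN : Algebra.norm F e ≠ 0 := (norm_eq_zero_iff hα hns hgen).not.mpr he
  rw [exists_sq_eq_div_iff he ((map_ne_zero σ).mpr he), ←
    algebraMap_norm_eq_mul_apply hα hns hgen hσ, exists_sq_eq_algebraMap_iff hchar hα hns hgen hN]

theorem norm_sqrtAlgHom_of_neg_eq_sq (hα : α ^ 2 = algebraMap F E a)
    (hns : ∀ f : F, f ^ 2 ≠ a) (hgen : Algebra.adjoin F {α} = ⊤) {s : F} (hsa : -a = s ^ 2)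
    (z : QuadraticAlgebra F a 0) :
    Algebra.norm F (sqrtAlgHom hα z) = z.re ^ 2 + (s * z.im) ^ 2 := by
  rw [norm_sqrtAlgHom hα hns hgen, QuadraticAlgebra.norm_def]
  linear_combination z.im ^ 2 * hsa

theorem forall_norm_mem_of_neg_eq_sq (hα : α ^ 2 = algebraMap F E a)
    (hns : ∀ f : F, f ^ 2 ≠ a) (hgen : Algebra.adjoin F {α} = ⊤) {s : F} (hsa : -a = s ^ 2)
    (hpyth : ∀ x y : F, ∃ z : F, x ^ 2 + y ^ 2 = z ^ 2) (e : E) (he : e ≠ 0) :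
    MemPowMulSquares a (Algebra.norm F e) := by
  obtain ⟨z, rfl⟩ := (sqrtAlgHom_bijective hα hns hgen).2 e
  obtain ⟨t, ht⟩ := hpyth z.re (s * z.im)
  have hN : Algebra.norm F (sqrtAlgHom hα z) = t ^ 2 := by
    rw [norm_sqrtAlgHom_of_neg_eq_sq hα hns hgen hsa, ht]
  refine ⟨0, t, ?_, by simp [hN]⟩
  rintro rfl
  exact he ((norm_eq_zero_iff hα hns hgen).mp (by simp [hN]))

theorem isPythagorean_of_forall_norm_mem (hα : α ^ 2 = algebraMap F E a)
    (hns : ∀ f : F, f ^ 2 ≠ a) (hgen : Algebra.adjoin F {α} = ⊤) {s : F} (hs : s ≠ 0)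
    (hsa : -a = s ^ 2) (hC : ∀ e : E, e ≠ 0 → MemPowMulSquares a (Algebra.norm F e))
    (hneg : ¬∃ e : E, e ≠ 0 ∧ Algebra.norm F e = -1) (x y : F) :
    ∃ z : F, x ^ 2 + y ^ 2 = z ^ 2 := by
  have hsum : ∀ x y : F, Algebra.norm F (sqrtAlgHom hα ⟨x, y / s⟩) = x ^ 2 + y ^ 2 := by
    intro x y
    rw [norm_sqrtAlgHom_of_neg_eq_sq hα hns hgen hsa, mul_div_cancel₀ y hs]
  have hne : ∀ {e : E} {c : F}, Algebra.norm F e = c → c ≠ 0 → e ≠ 0 := by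
    rintro e c rfl hc rfl
    exact hc ((norm_eq_zero_iff hα hns hgen).mpr rfl)
  by_cases h0 : x ^ 2 + y ^ 2 = 0
  · exact ⟨0, by rw [h0]; ring⟩
  obtain ⟨ε, g, hg, hxy⟩ := hC _ (hne (hsum x y) h0)
  rw [hsum] at hxy
  fin_cases ε
  · exact ⟨g, by simpa using hxy⟩
  · -- `x² + y² = a g² = -(s g)²`, so `-1` is again a sum of two squares, hence a norm
    have hsg : s * g ≠ 0 := mul_ne_zero hs hg
    have hnorm : Algebra.norm F (sqrtAlgHom hα ⟨x / (s * g), y / (s * g) / s⟩) = -1 := by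
      rw [hsum]
      field_simp
      simp only [pow_one] at hxy
      linear_combination hxy - g ^ 2 * hsa
    exact (hneg ⟨_, hne hnorm (by norm_num), hnorm⟩).elim

end AdjoinSqrt

open AdjoinSqrt in
theorem trivial_action_iff_two_general
    {F E : Type*} [Field F] [Field E] [Algebra F E]
    (hchar : (2 : F) ≠ 0)
    (a : F) (hns : ∀ f : F, f ^ 2 ≠ a)
    (α : E) (hα : α ^ 2 = algebraMap F E a)
    (hgen : Algebra.adjoin F {α} = ⊤)
    (σ : E ≃ₐ[F] E) (hσ : σ ≠ 1) :
    (∀ e : E, e ≠ 0 → ∃ u : E, u ≠ 0 ∧ σ e / e = u ^ 2) ↔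
      (((∃ e : E, e ≠ 0 ∧ Algebra.norm F e = -1) ∧
          ∀ e : E, e ≠ 0 → ∃ ε : Fin 2, ∃ g : F, g ≠ 0 ∧
            Algebra.norm F e = a ^ (ε : ℕ) * g ^ 2) ∨
        ((∃ s : F, s ≠ 0 ∧ -a = s ^ 2) ∧
          ∀ x y : F, ∃ z : F, x ^ 2 + y ^ 2 = z ^ 2)) := by
  rw [forall_exists_sq_eq_apply_div_self_iff hchar hα hns hgen hσ]
  refine ⟨fun hC => ?_, ?_⟩
  · have ha : a ≠ 0 := fun h => hns 0 (by simp [h])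
    have hα0 : α ≠ 0 := ne_zero_pow two_ne_zero (hα ▸ (map_ne_zero _).mpr ha)
    obtain ⟨ε, g, hg, hag⟩ := hC α hα0
    have hnormα : Algebra.norm F α = -a := by
      simpa [QuadraticAlgebra.norm_def] using norm_sqrtAlgHom hα hns hgen ⟨0, 1⟩
    rw [hnormα] at hag
    fin_cases ε
    · by_cases hneg : ∃ e : E, e ≠ 0 ∧ Algebra.norm F e = -1
      · exact .inl ⟨hneg, hC⟩
      · have hsa : -a = g ^ 2 := by simpa using hag
        exact .inr ⟨⟨g, hg, hsa⟩, isPythagorean_of_forall_norm_mem hα hns hgen hg hsa hC hneg⟩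
    · have hg2 : g ^ 2 = -1 := mul_left_cancel₀ ha (by simp only [pow_one] at hag; linear_combination -hag)
      have hnormg : Algebra.norm F (algebraMap F E g) = g ^ 2 := by
        simpa using norm_sqrtAlgHom hα hns hgen (algebraMap F _ g)
      exact .inl ⟨⟨algebraMap F E g, by simpa using hg, hnormg.trans hg2⟩, hC⟩
  · rintro (⟨-, hC⟩ | ⟨⟨s, -, hsa⟩, hpyth⟩)
    · exact hC
    · exact forall_norm_mem_of_neg_eq_sq hα hns hgen hsa hpyth

/-- Let `F` be a field of characteristic different from 2, `a ∈ F^×` a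
non-square, `E = F(√a)`, `σ` the nontrivial element of `Gal(E/F)`.  Then `σ` acts trivially on
`E^×/E^{×2}` if and only if either (i) `-1 ∈ N_{E/F}(E^×)` and `N_{E/F}(E^×) ⊆ ⟨a⟩·F^{×2}`, or
(ii) `-a ∈ F^{×2}` and `F` is a Pythagorean field. -/
theorem trivial_action_iff_two
    {F E : Type*} [Field F] [Field E] [Algebra F E]
    (hchar : (2 : F) ≠ 0)
    (a : F) (ha : a ≠ 0) (hns : ∀ f : F, f ^ 2 ≠ a)
    (α : E) (hα : α ^ 2 = algebraMap F E a)
    (hgen : Algebra.adjoin F {α} = ⊤)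
    (σ : E ≃ₐ[F] E) (hσ : σ ≠ 1) :
    (∀ e : E, e ≠ 0 → ∃ u : E, u ≠ 0 ∧ σ e / e = u ^ 2) ↔
      (((∃ e : E, e ≠ 0 ∧ Algebra.norm F e = -1) ∧
          ∀ e : E, e ≠ 0 → ∃ ε : Fin 2, ∃ g : F, g ≠ 0 ∧
            Algebra.norm F e = a ^ (ε : ℕ) * g ^ 2) ∨
        ((∃ s : F, s ≠ 0 ∧ -a = s ^ 2) ∧
          ∀ x y : F, ∃ z : F, x ^ 2 + y ^ 2 = z ^ 2)) :=
  trivial_action_iff_two_general hchar a hns α hα hgen σ hσ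
end

section
/- Let F be a field of characteristic different from 2 and suppose a = x² + y² for some x, y ∈ F^×, with a not a square in F. Let E = F(√a) and let σ be the nontrivial element of Gal(E/F). Then there exists δ ∈ E^× such that σ(δ)/δ ∈ E^{×2} and N_{E/F}(δ) = a·f² for some f ∈ F^×. (In the paper's notation: if a ∈ (F^{×2} + F^{×2}) ∖ F², there exists a class (δ) ∈ H^1(E)^G with N_{E/F}(δ) = (a).) -/
/-- Let `F` be a field of characteristic different from 2 and suppose
`a = x² + y²` for some `x, y ∈ F^×`, with `a` not a square in `F`.  Let `E = F(√a)` and `σ`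
the nontrivial element of `Gal(E/F)`.  Then there exists `δ ∈ E^×` whose class in `E^×/E^{×2}`
is fixed by `σ` and such that `N_{E/F}(δ) = a·f²` for some `f ∈ F^×`. -/
theorem exists_fixed_class_with_norm_a
    {F E : Type*} [Field F] [Field E] [Algebra F E]
    (hchar : (2 : F) ≠ 0)
    (a x y : F) (hx : x ≠ 0) (hy : y ≠ 0) (haxy : a = x ^ 2 + y ^ 2)
    (hns : ∀ f : F, f ^ 2 ≠ a)
    (α : E) (hα : α ^ 2 = algebraMap F E a)
    (hgen : Algebra.adjoin F {α} = ⊤)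
    (σ : E ≃ₐ[F] E) (hσ : σ ≠ 1) :
    ∃ δ : E, δ ≠ 0 ∧ (∃ u : E, u ≠ 0 ∧ σ δ / δ = u ^ 2) ∧
      ∃ f : F, f ≠ 0 ∧ Algebra.norm F δ = a * f ^ 2 := by
  set A := algebraMap F E with hA
  have hinj : Function.Injective A := (algebraMap F E).injective
  have ha0 : a ≠ 0 := fun h => hns 0 (by simp [h])
  have hαF : α ∉ (algebraMap F E).range := by
    rintro ⟨c, hc⟩
    exact hns c (hinj (by rw [map_pow, hc, hα]))
  have hα0 : α ≠ 0 := by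
    intro h
    apply ha0
    apply hinj
    rw [← hα, h, map_zero]
    ring
  -- the field equation in E
  have hEaxy : A a = A x ^ 2 + A y ^ 2 := by
    rw [← map_pow, ← map_pow, ← map_add, ← haxy]
  -- σ α = -α
  have hσα : σ α = -α := by
    have hsq : σ α ^ 2 = α ^ 2 := by
      rw [← map_pow, hα, AlgEquiv.commutes, ← hα]
    have h2 : (σ α - α) * (σ α + α) = 0 := by linear_combination hsq
    rcases mul_eq_zero.mp h2 with h | h
    · exfalso
      apply hσ
      have hfix : σ α = α := by linear_combination h
      have hle : Algebra.adjoin F {α} ≤ AlgHom.equalizer (σ : E →ₐ[F] E) (AlgHom.id F E) := by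
        apply Algebra.adjoin_le
        intro z hz
        rw [Set.mem_singleton_iff] at hz
        subst hz
        exact hfix
      ext z
      have hz : z ∈ AlgHom.equalizer (σ : E →ₐ[F] E) (AlgHom.id F E) :=
        hle (hgen ▸ Algebra.mem_top)
      exact hz
    · linear_combination h
  set δ : E := A a + A x * α with hδdef
  have hδfac : δ = α * (A x + α) := by
    rw [hδdef]
    linear_combination -hα
  have hxpα : A x + α ≠ 0 := by
    intro h
    apply hαF
    refine ⟨-x, ?_⟩
    rw [map_neg]
    linear_combination -h
  have hxmα : A x - α ≠ 0 := by
    intro h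
    apply hαF
    exact ⟨x, by linear_combination h⟩
  have hδ0 : δ ≠ 0 := by
    rw [hδfac]; exact mul_ne_zero hα0 hxpα
  have hy0 : A y ≠ 0 := fun h => hy (hinj (by rw [h, map_zero]))
  have hx0 : A x ≠ 0 := fun h => hx (hinj (by rw [h, map_zero]))
  -- σ δ
  have hσδ : σ δ = A a - A x * α := by
    rw [hδdef]
    simp only [map_add, map_mul, AlgEquiv.commutes, hσα, hA]
    ring
  refine ⟨δ, hδ0, ?_, ?_⟩
  · -- the square class of δ is fixed by σ
    set u : E := (A x - α) / A y with hu
    refine ⟨u, div_ne_zero hxmα hy0, ?_⟩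
    have huδ : u * δ = -(α * A y) := by
      rw [hu, hδfac, div_mul_eq_mul_div, div_eq_iff hy0]
      linear_combination (-α) * hα + (-α) * hEaxy
    have hNδ : σ δ * δ = A a * A y ^ 2 := by
      rw [hσδ, hδdef]
      linear_combination (-(A x ^ 2)) * hα + A a * hEaxy
    have key : u ^ 2 * δ * δ = σ δ * δ := by
      calc u ^ 2 * δ * δ = (u * δ) ^ 2 := by ring
        _ = A a * A y ^ 2 := by rw [huδ]; linear_combination A y ^ 2 * hα
        _ = σ δ * δ := hNδ.symm
    have : u ^ 2 * δ = σ δ := mul_right_cancel₀ hδ0 key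
    rw [← this, mul_div_assoc, div_self hδ0, mul_one]
  · -- the norm of δ
    refine ⟨y, hy, ?_⟩
    set q : Polynomial F := Polynomial.X ^ 2 - Polynomial.C (2 * a) * Polynomial.X +
      Polynomial.C (a * y ^ 2) with hq
    have haev : Polynomial.aeval δ q = 0 := by
      rw [hq]
      simp only [map_add, map_sub, map_pow, map_mul, Polynomial.aeval_X, Polynomial.aeval_C,
        map_ofNat]
      rw [hδdef]
      linear_combination (A x ^ 2) * hα + (-(A a)) * hEaxy
    have hqm : q.Monic := by
      rw [hq]
      monicity!
    have hq2 : q.natDegree = 2 := by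
      rw [hq]
      compute_degree!
    have hint : IsIntegral F δ := ⟨q, hqm, by rwa [← Polynomial.aeval_def]⟩
    have hδF : δ ∉ (algebraMap F E).range := by
      rintro ⟨c, hc⟩
      apply hαF
      refine ⟨(c - a) / x, ?_⟩
      rw [hδdef] at hc
      rw [map_div₀, map_sub, div_eq_iff hx0]
      linear_combination hc
    have hdvd : minpoly F δ ∣ q := minpoly.dvd F δ haev
    have hminq : minpoly F δ = q := by
      obtain ⟨c, hc⟩ := hdvd
      have hmm : (minpoly F δ).Monic := minpoly.monic hint
      have hc0 : c ≠ 0 := by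
        rintro rfl
        rw [mul_zero] at hc
        exact hqm.ne_zero hc
      have hdegs : (minpoly F δ).natDegree + c.natDegree = 2 := by
        rw [← Polynomial.natDegree_mul hmm.ne_zero hc0, ← hc, hq2]
      have hge : 2 ≤ (minpoly F δ).natDegree :=
        (minpoly.two_le_natDegree_iff hint).mpr hδF
      have hcdeg : c.natDegree = 0 := by omega
      have hcm : c.Monic := by
        have := hqm.leadingCoeff
        rw [hc, Polynomial.leadingCoeff_mul, hmm.leadingCoeff, one_mul] at this
        exact this
      rw [hc, Polynomial.eq_one_of_monic_natDegree_zero hcm hcdeg, mul_one]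
    -- power basis with generator δ
    have hadj : Algebra.adjoin F {δ} = ⊤ := by
      rw [eq_top_iff, ← hgen]
      apply Algebra.adjoin_le
      intro z hz
      rw [Set.mem_singleton_iff] at hz
      rw [hz]
      have hαeq : α = A x⁻¹ * (δ - A a) := by
        rw [map_inv₀, hδdef, add_sub_cancel_left, inv_mul_cancel_left₀ hx0]
      rw [hαeq]
      exact mul_mem (Subalgebra.algebraMap_mem _ _)
        (sub_mem (Algebra.subset_adjoin rfl) (Subalgebra.algebraMap_mem _ _))
    let pb : PowerBasis F E :=
      (Algebra.adjoin.powerBasis hint).map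
        ((Subalgebra.equivOfEq _ ⊤ hadj).trans Subalgebra.topEquiv)
    have hpbgen : pb.gen = δ := rfl
    have hpbdim : pb.dim = 2 := by
      have : pb.dim = (minpoly F δ).natDegree := rfl
      rw [this, hminq, hq2]
    have hnorm := Algebra.PowerBasis.norm_gen_eq_coeff_zero_minpoly pb
    rw [hpbgen, hpbdim, hminq, hq] at hnorm
    rw [hnorm]
    rw [Polynomial.coeff_add, Polynomial.coeff_sub, Polynomial.coeff_X_pow,
      Polynomial.coeff_C_mul, Polynomial.coeff_X_zero, Polynomial.coeff_C]
    norm_num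
end

section
/- Let F be a field of characteristic different from 2 and suppose a = x² + y² for some x, y ∈ F^×, with a not a square in F. Let E = F(√a), σ the nontrivial element of Gal(E/F), and let δ ∈ E^× satisfy σ(δ)/δ ∈ E^{×2} and N_{E/F}(δ) ∈ a·F^{×2}. Then σ acts trivially on E^×/E^{×2} (i.e. σ(e)/e ∈ E^{×2} for all e ∈ E^×) if and only if every e ∈ E^× can be written e = f·δ^ε·u² with f ∈ F^×, ε ∈ {0,1}, u ∈ E^×. (This is the case n = 1 of condition (3) in the paper's Theorem 3 for p = 2: H^1(E) is trivial iff H^1(E) = res H^1(F) + (δ) ∪ res H^0(F).) -/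
/-!
Write `E = F(α)` with `α² = a`, so that `σ α = -α`, `E^σ = F` and `N_{E/F}(e) = e · σ e`.
If `σ e = e u²`, applying `σ` once more gives `(u · σ u)² = 1`.  When `u · σ u = 1`, Hilbert 90
writes `u = σ c / c`, and then `e / c²` is fixed by `σ`, i.e. lies in `F`.  When `u · σ u = -1`,
the same argument applies to `e / δ`: writing `σ δ = δ v²`, the norm condition
`δ · σ δ = (α f)²` forces `δ v = ±α f`, hence `v · σ v = -1`, and `(u / v) · σ (u / v) = 1`.
-/

theorem AlgEquiv.ext_of_adjoin_singleton_eq_top {R A B : Type*} [CommSemiring R] [Semiring A]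
    [Semiring B] [Algebra R A] [Algebra R B] {x : A} (hgen : Algebra.adjoin R {x} = ⊤)
    {τ ρ : A ≃ₐ[R] B} (h : τ x = ρ x) : τ = ρ :=
  AlgEquiv.coe_toAlgHom_injective (AlgHom.ext_of_adjoin_eq_top hgen (Set.eqOn_singleton.mpr h))

theorem exists_apply_eq_mul_of_mul_apply_eq_one {F E : Type*} [Field F] [Field E] [Algebra F E]
    {σ : E ≃ₐ[F] E} {α : E} (hα0 : α ≠ 0) (hσα : σ α = -α) {u : E}
    (hu : u * σ u = 1) : ∃ c : E, c ≠ 0 ∧ σ c = u * c := by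
  by_cases hu_neg : u = -1
  · exact ⟨α, hα0, by rw [hσα, hu_neg]; ring⟩
  have hu_add : u + 1 ≠ 0 := fun h => hu_neg (by linear_combination h)
  have hu0 : u ≠ 0 := left_ne_zero_of_mul_eq_one hu
  refine ⟨(u + 1)⁻¹, inv_ne_zero hu_add, ?_⟩
  calc σ (u + 1)⁻¹ = ((u + 1) * u⁻¹)⁻¹ := by
        rw [map_inv₀, map_add, map_one, eq_inv_of_mul_eq_one_right hu, add_mul,
          mul_inv_cancel₀ hu0, one_mul, add_comm]
    _ = u * (u + 1)⁻¹ := by rw [mul_inv, inv_inv, mul_comm]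

theorem exists_apply_div_self_eq_sq {F E : Type*} [Field F] [Field E] [Algebra F E]
    (σ : E ≃ₐ[F] E) {δ v : E} (hδ : δ ≠ 0) (hv : v ≠ 0) (hσδ : σ δ = δ * v ^ 2) {f : F}
    (hf : f ≠ 0) (n : ℕ) {u : E} (hu : u ≠ 0) :
    ∃ w : E, w ≠ 0 ∧
      σ (algebraMap F E f * δ ^ n * u ^ 2) / (algebraMap F E f * δ ^ n * u ^ 2) = w ^ 2 := by
  have hσu : σ u ≠ 0 := by simpa using hu
  have hf' : algebraMap F E f ≠ 0 := by simpa using hf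
  refine ⟨v ^ n * (σ u / u), by positivity, ?_⟩
  rw [map_mul, map_mul, map_pow, map_pow, AlgEquiv.commutes, hσδ]
  field_simp
  ring

namespace QuadraticExtension

variable {F E : Type*} [Field F] [Field E] [Algebra F E] {a : F} {α : E} {σ : E ≃ₐ[F] E}

theorem exists_eq_algebraMap_add_algebraMap_mul (hα : α ^ 2 = algebraMap F E a)
    (hgen : Algebra.adjoin F {α} = ⊤) (e : E) :
    ∃ p q : F, e = algebraMap F E p + algebraMap F E q * α := by
  have he : e ∈ Algebra.adjoin F {α} := hgen ▸ Algebra.mem_top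
  induction he using Algebra.adjoin_induction with
  | mem z hz => exact ⟨0, 1, by simp [Set.mem_singleton_iff.mp hz]⟩
  | algebraMap r => exact ⟨r, 0, by simp⟩
  | add z w _ _ ihz ihw =>
    obtain ⟨p, q, rfl⟩ := ihz
    obtain ⟨r, s, rfl⟩ := ihw
    exact ⟨p + r, q + s, by simp only [map_add]; ring⟩
  | mul z w _ _ ihz ihw =>
    obtain ⟨p, q, rfl⟩ := ihz
    obtain ⟨r, s, rfl⟩ := ihw
    refine ⟨p * r + q * s * a, p * s + q * r, ?_⟩
    simp only [map_add, map_mul]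
    linear_combination (algebraMap F E q * algebraMap F E s) * hα

theorem finiteDimensional_of_adjoin_eq_top (hα : α ^ 2 = algebraMap F E a)
    (hgen : Algebra.adjoin F {α} = ⊤) : FiniteDimensional F E := by
  refine Module.finite_def.mpr (Submodule.fg_def.mpr
    ⟨{1, α}, Set.toFinite _, eq_top_iff.mpr fun e _ => ?_⟩)
  obtain ⟨p, q, rfl⟩ := exists_eq_algebraMap_add_algebraMap_mul hα hgen e
  rw [← mul_one (algebraMap F E p), ← Algebra.smul_def, ← Algebra.smul_def]
  exact add_mem (Submodule.smul_mem _ _ (Submodule.subset_span (by simp)))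
    (Submodule.smul_mem _ _ (Submodule.subset_span (by simp)))

theorem apply_ne_self_of_ne_one (hgen : Algebra.adjoin F {α} = ⊤) (hσ : σ ≠ 1) : σ α ≠ α :=
  fun h => hσ (AlgEquiv.ext_of_adjoin_singleton_eq_top hgen h)

theorem apply_eq_neg_of_sq_eq_algebraMap (hα : α ^ 2 = algebraMap F E a)
    (hgen : Algebra.adjoin F {α} = ⊤) (hσ : σ ≠ 1) : σ α = -α := by
  have hsq : σ α ^ 2 = α ^ 2 := by rw [← map_pow, hα, AlgEquiv.commutes]
  exact (sq_eq_sq_iff_eq_or_eq_neg.mp hsq).resolve_left (apply_ne_self_of_ne_one hgen hσ)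

theorem eq_one_or_eq_of_ne_one (hα : α ^ 2 = algebraMap F E a)
    (hgen : Algebra.adjoin F {α} = ⊤) (hσ : σ ≠ 1) (τ : E ≃ₐ[F] E) : τ = 1 ∨ τ = σ := by
  have hsq : τ α ^ 2 = α ^ 2 := by rw [← map_pow, hα, AlgEquiv.commutes]
  refine (sq_eq_sq_iff_eq_or_eq_neg.mp hsq).imp
    (AlgEquiv.ext_of_adjoin_singleton_eq_top hgen) fun h => ?_
  exact AlgEquiv.ext_of_adjoin_singleton_eq_top hgen
    (h.trans (apply_eq_neg_of_sq_eq_algebraMap hα hgen hσ).symm)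

theorem mul_self_eq_one_of_ne_one (hα : α ^ 2 = algebraMap F E a)
    (hgen : Algebra.adjoin F {α} = ⊤) (hσ : σ ≠ 1) : σ * σ = 1 :=
  (eq_one_or_eq_of_ne_one hα hgen hσ (σ * σ)).resolve_right fun h => hσ (mul_eq_right.mp h)

theorem mem_range_algebraMap_of_apply_eq_self (hα : α ^ 2 = algebraMap F E a)
    (hgen : Algebra.adjoin F {α} = ⊤) (hσ : σ ≠ 1) {e : E} (he : σ e = e) :
    e ∈ Set.range (algebraMap F E) := by
  obtain ⟨p, q, rfl⟩ := exists_eq_algebraMap_add_algebraMap_mul hα hgen e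
  simp only [map_add, map_mul, AlgEquiv.commutes] at he
  have hq : algebraMap F E q * (σ α - α) = 0 := by linear_combination he
  obtain rfl : q = 0 := by simpa [sub_ne_zero.mpr (apply_ne_self_of_ne_one hgen hσ)] using hq
  exact ⟨p, by simp⟩

theorem isGalois_of_adjoin_eq_top (hα : α ^ 2 = algebraMap F E a)
    (hgen : Algebra.adjoin F {α} = ⊤) (hσ : σ ≠ 1) : IsGalois F E := by
  have := finiteDimensional_of_adjoin_eq_top hα hgen
  refine IsGalois.of_fixedField_eq_bot F E (eq_bot_iff.mpr fun e he => ?_)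
  exact IntermediateField.mem_bot.mpr
    (mem_range_algebraMap_of_apply_eq_self hα hgen hσ (he ⟨σ, Subgroup.mem_top σ⟩))

theorem algebraMap_norm_eq_mul_apply (hα : α ^ 2 = algebraMap F E a)
    (hgen : Algebra.adjoin F {α} = ⊤) (hσ : σ ≠ 1) (e : E) :
    algebraMap F E (Algebra.norm F e) = e * σ e := by
  have := finiteDimensional_of_adjoin_eq_top hα hgen
  have := isGalois_of_adjoin_eq_top hα hgen hσ
  rw [Algebra.norm_eq_prod_automorphisms, Fintype.prod_eq_mul 1 σ hσ.symm, AlgEquiv.one_apply]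
  rintro τ ⟨h1, hσ'⟩
  exact ((eq_one_or_eq_of_ne_one hα hgen hσ τ).elim h1 hσ').elim

theorem mul_apply_sq_eq_one (hα : α ^ 2 = algebraMap F E a) (hgen : Algebra.adjoin F {α} = ⊤)
    (hσ : σ ≠ 1) {e u : E} (he : e ≠ 0) (hσe : σ e = e * u ^ 2) : (u * σ u) ^ 2 = 1 := by
  have hσσe : σ (σ e) = e := by
    rw [← AlgEquiv.mul_apply, mul_self_eq_one_of_ne_one hα hgen hσ, AlgEquiv.one_apply]
  rw [hσe, map_mul, hσe, map_pow] at hσσe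
  exact mul_left_cancel₀ he (by linear_combination hσσe)

theorem exists_eq_algebraMap_mul_sq (hα : α ^ 2 = algebraMap F E a)
    (hgen : Algebra.adjoin F {α} = ⊤) (hσ : σ ≠ 1) {e w : E} (he : e ≠ 0)
    (hσe : σ e = e * w ^ 2) (hw : w * σ w = 1) :
    ∃ f : F, ∃ c : E, f ≠ 0 ∧ c ≠ 0 ∧ e = algebraMap F E f * c ^ 2 := by
  have hσα := apply_eq_neg_of_sq_eq_algebraMap hα hgen hσ
  have hα0 : α ≠ 0 := fun h => apply_ne_self_of_ne_one hgen hσ (by simp [h])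
  obtain ⟨c, hc0, hσc⟩ := exists_apply_eq_mul_of_mul_apply_eq_one hα0 hσα hw
  have hw0 : w ≠ 0 := left_ne_zero_of_mul_eq_one hw
  have hfix : σ (e / c ^ 2) = e / c ^ 2 := by
    rw [map_div₀, map_pow, hσe, hσc]
    field_simp
  obtain ⟨f, hf⟩ := mem_range_algebraMap_of_apply_eq_self hα hgen hσ hfix
  refine ⟨f, c, fun h0 => ?_, hc0, by rw [hf]; field_simp⟩
  rw [h0, map_zero] at hf
  exact div_ne_zero he (pow_ne_zero 2 hc0) hf.symm

theorem mul_apply_eq_neg_one_of_norm_eq (hα : α ^ 2 = algebraMap F E a)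
    (hgen : Algebra.adjoin F {α} = ⊤) (hσ : σ ≠ 1) {δ v : E} {f : F} (hδ : δ ≠ 0)
    (hσδ : σ δ = δ * v ^ 2) (hN : Algebra.norm F δ = a * f ^ 2) : v * σ v = -1 := by
  have hσα := apply_eq_neg_of_sq_eq_algebraMap hα hgen hσ
  have hv0 : v ≠ 0 := by
    rintro rfl
    exact hδ (σ.injective (by simpa using hσδ))
  have hsq : (δ * v) ^ 2 = (α * algebraMap F E f) ^ 2 := by
    have := algebraMap_norm_eq_mul_apply hα hgen hσ δ
    rw [hN, map_mul, map_pow, ← hα, hσδ] at this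
    linear_combination -this
  have hanti : σ (δ * v) = -(δ * v) := by
    rcases sq_eq_sq_iff_eq_or_eq_neg.mp hsq with h | h <;>
      simp only [h, map_neg, map_mul, hσα, AlgEquiv.commutes, neg_mul, neg_neg]
  rw [map_mul, hσδ] at hanti
  exact mul_left_cancel₀ (mul_ne_zero hδ hv0) (by linear_combination hanti)

end QuadraticExtension

open QuadraticExtension

theorem trivial_action_iff_generated_by_delta_general
    {F E : Type*} [Field F] [Field E] [Algebra F E]
    (a : F)
    (α : E) (hα : α ^ 2 = algebraMap F E a)
    (hgen : Algebra.adjoin F {α} = ⊤)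
    (σ : E ≃ₐ[F] E) (hσ : σ ≠ 1)
    (δ : E)
    (hδfix : ∃ u : E, u ≠ 0 ∧ σ δ / δ = u ^ 2)
    (hδnorm : ∃ f : F, f ≠ 0 ∧ Algebra.norm F δ = a * f ^ 2) :
    (∀ e : E, e ≠ 0 → ∃ u : E, u ≠ 0 ∧ σ e / e = u ^ 2) ↔
      (∀ e : E, e ≠ 0 → ∃ f : F, ∃ ε : Fin 2, ∃ u : E, f ≠ 0 ∧ u ≠ 0 ∧
        e = algebraMap F E f * δ ^ (ε : ℕ) * u ^ 2) := by
  obtain ⟨v, hv0, hδv⟩ := hδfix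
  obtain ⟨f₀, -, hN⟩ := hδnorm
  have hδ0 : δ ≠ 0 := by
    rintro rfl
    exact hv0 (pow_eq_zero_iff two_ne_zero |>.mp (by simpa using hδv.symm))
  have hσδ : σ δ = δ * v ^ 2 := by rw [← hδv, mul_div_cancel₀ _ hδ0]
  have hvσv := mul_apply_eq_neg_one_of_norm_eq hα hgen hσ hδ0 hσδ hN
  constructor
  · intro H e he
    obtain ⟨u, -, hue⟩ := H e he
    have hσe : σ e = e * u ^ 2 := by rw [← hue, mul_div_cancel₀ _ he]
    rcases sq_eq_one_iff.mp (mul_apply_sq_eq_one hα hgen hσ he hσe) with h | h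
    · obtain ⟨f, c, hf, hc, rfl⟩ := exists_eq_algebraMap_mul_sq hα hgen hσ he hσe h
      exact ⟨f, 0, c, hf, hc, by simp⟩
    · obtain ⟨f, c, hf, hc, hec⟩ := exists_eq_algebraMap_mul_sq hα hgen hσ (w := u / v)
        (div_ne_zero he hδ0) (by rw [map_div₀, hσe, hσδ]; field_simp)
        (by rw [map_div₀, div_mul_div_comm, h, hvσv, neg_div_neg_eq, div_one])
      refine ⟨f, 1, c, hf, hc, ?_⟩
      rw [div_eq_iff hδ0] at hec
      rw [hec, Fin.val_one, pow_one]
      ring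
  · intro H e he
    obtain ⟨f, ε, u, hf, hu, rfl⟩ := H e he
    exact exists_apply_div_self_eq_sq σ hδ0 hv0 hσδ hf ε hu

/-- Let `F` be a field of characteristic different from 2, `a = x² + y²` with
`x, y ∈ F^×` and `a` not a square, `E = F(√a)`, `σ` the nontrivial element of `Gal(E/F)`, and
`δ ∈ E^×` with `σ(δ)/δ ∈ E^{×2}` and `N_{E/F}(δ) ∈ a·F^{×2}`.  Then `σ` acts trivially on
`E^×/E^{×2}` if and only if every `e ∈ E^×` can be written `e = f·δ^ε·u²` with `f ∈ F^×`,
`ε ∈ {0,1}`, `u ∈ E^×`. -/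
theorem trivial_action_iff_generated_by_delta
    {F E : Type*} [Field F] [Field E] [Algebra F E]
    (hchar : (2 : F) ≠ 0)
    (a x y : F) (hx : x ≠ 0) (hy : y ≠ 0) (haxy : a = x ^ 2 + y ^ 2)
    (hns : ∀ f : F, f ^ 2 ≠ a)
    (α : E) (hα : α ^ 2 = algebraMap F E a)
    (hgen : Algebra.adjoin F {α} = ⊤)
    (σ : E ≃ₐ[F] E) (hσ : σ ≠ 1)
    (δ : E) (hδ0 : δ ≠ 0)
    (hδfix : ∃ u : E, u ≠ 0 ∧ σ δ / δ = u ^ 2)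
    (hδnorm : ∃ f : F, f ≠ 0 ∧ Algebra.norm F δ = a * f ^ 2) :
    (∀ e : E, e ≠ 0 → ∃ u : E, u ≠ 0 ∧ σ e / e = u ^ 2) ↔
      (∀ e : E, e ≠ 0 → ∃ f : F, ∃ ε : Fin 2, ∃ u : E, f ≠ 0 ∧ u ≠ 0 ∧
        e = algebraMap F E f * δ ^ (ε : ℕ) * u ^ 2) :=
  trivial_action_iff_generated_by_delta_general a α hα hgen σ hσ δ hδfix hδnorm
end

section
/- Let F be a field of characteristic different from 2, a ∈ F^× a non-square, E = F(√a), σ the nontrivial element of Gal(E/F). Assume that −1 ∉ N_{E/F}(E^×) and that every f ∈ F^× can be written f = N_{E/F}(e)·a^ε·g² with e ∈ E^×, ε ∈ {0,1}, g ∈ F^×. Then the G-fixed part of E^×/E^{×2} is exactly the image of F^×: an element e ∈ E^× satisfies σ(e)/e ∈ E^{×2} if and only if e ∈ F^×·E^{×2}. (This is the case n = 1 of the paper's Lemma on extending norm classes, part (2), for p = 2: (k_1 E)^G = i_E k_1 F.) -/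
/-!
Writing `E = F ⊕ Fα`, the automorphism `σ` is `x + yα ↦ x - yα`: its fixed field is `F` and
`N(u) = u σ(u)`. If `σ(e) = e u²`, applying `σ` once more gives `N(u)² = 1`. The case
`N(u) = -1` is excluded by hypothesis; if `N(u) = 1`, Hilbert 90 writes `u = v / σ(v)`, so that
`e v²` is `σ`-fixed, hence lies in `F`.
-/

section CommRing

variable {R A : Type*} [CommRing R] [CommRing A] [Algebra R A] {a : R} {α : A}

theorem exists_eq_algebraMap_add_algebraMap_mul (hα : α ^ 2 = algebraMap R A a)
    (hgen : Algebra.adjoin R {α} = ⊤) (z : A) :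
    ∃ x y : R, z = algebraMap R A x + algebraMap R A y * α := by
  have hz : z ∈ Algebra.adjoin R {α} := hgen ▸ Algebra.mem_top
  induction hz using Algebra.adjoin_induction with
  | mem z hz => exact ⟨0, 1, by simp [Set.mem_singleton_iff.mp hz]⟩
  | algebraMap r => exact ⟨r, 0, by simp⟩
  | add z w _ _ hz hw =>
    obtain ⟨x, y, rfl⟩ := hz
    obtain ⟨x', y', rfl⟩ := hw
    exact ⟨x + x', y + y', by simp only [map_add]; ring⟩
  | mul z w _ _ hz hw =>
    obtain ⟨x, y, rfl⟩ := hz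
    obtain ⟨x', y', rfl⟩ := hw
    refine ⟨x * x' + a * y * y', x * y' + y * x', ?_⟩
    simp only [map_add, map_mul]
    linear_combination (algebraMap R A y * algebraMap R A y') * hα

theorem AlgEquiv.involutive_of_apply_eq_neg {σ : A ≃ₐ[R] A} (hgen : Algebra.adjoin R {α} = ⊤)
    (hσα : σ α = -α) : Function.Involutive σ := by
  have hσσ : σ.trans σ = 1 :=
    coe_toAlgHom_injective (AlgHom.ext_of_adjoin_eq_top hgen (by simp [hσα]))
  exact fun z => DFunLike.congr_fun hσσ z

end CommRing

section Norm

variable {F A : Type*} [Field F] [CommRing A] [Nontrivial A] [Algebra F A] {a : F} {α : A}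

theorem Algebra.norm_algebraMap_add_algebraMap_mul (hα : α ^ 2 = algebraMap F A a)
    (hgen : Algebra.adjoin F {α} = ⊤) (hαF : α ∉ Set.range (algebraMap F A)) (x y : F) :
    Algebra.norm F (algebraMap F A x + algebraMap F A y * α) = x ^ 2 - a * y ^ 2 := by
  have hli : LinearIndependent F ![1, α] :=
    (LinearIndependent.pair_iff' one_ne_zero).mpr fun c hc =>
      hαF ⟨c, by rw [Algebra.algebraMap_eq_smul_one, hc]⟩
  have hsp : ⊤ ≤ Submodule.span F (Set.range ![1, α]) := by
    rintro z -
    obtain ⟨x, y, rfl⟩ := exists_eq_algebraMap_add_algebraMap_mul hα hgen z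
    rw [Submodule.mem_span_range_iff_exists_fun]
    exact ⟨![x, y], by simp [Algebra.smul_def, mul_comm]⟩
  let b := Module.Basis.mk hli hsp
  have hb0 : b 0 = 1 := by simp [b]
  have hb1 : b 1 = α := by simp [b]
  have hmul0 : (algebraMap F A x + algebraMap F A y * α) * b 0 = x • b 0 + y • b 1 := by
    rw [hb0, hb1, Algebra.smul_def, Algebra.smul_def]; ring
  have hmul1 : (algebraMap F A x + algebraMap F A y * α) * b 1 = (a * y) • b 0 + x • b 1 := by
    rw [hb0, hb1, Algebra.smul_def, Algebra.smul_def, map_mul]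
    linear_combination algebraMap F A y * hα
  rw [Algebra.norm_eq_matrix_det b, Matrix.det_fin_two]
  simp only [Algebra.leftMulMatrix_eq_repr_mul, hmul0, hmul1, map_add, map_smul,
    Module.Basis.repr_self, Finsupp.add_apply, Finsupp.smul_apply, Finsupp.single_apply,
    if_true, one_ne_zero, zero_ne_one, if_false, smul_eq_mul]
  ring

end Norm

section Field

variable {F E : Type*} [Field F] [Field E] [Algebra F E] {a : F} {α : E}

namespace AlgEquiv

variable {σ : E ≃ₐ[F] E}

theorem apply_eq_neg_of_ne_one (hα : α ^ 2 = algebraMap F E a)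
    (hgen : Algebra.adjoin F {α} = ⊤) (hσ : σ ≠ 1) : σ α = -α := by
  have hsq : σ α ^ 2 = α ^ 2 := by rw [← map_pow, hα, σ.commutes]
  refine (sq_eq_sq_iff_eq_or_eq_neg.mp hsq).resolve_left fun hfix => hσ ?_
  exact coe_toAlgHom_injective (AlgHom.ext_of_adjoin_eq_top hgen (by simpa))

theorem mem_range_algebraMap_of_apply_eq_self (hchar : (2 : F) ≠ 0)
    (hα : α ^ 2 = algebraMap F E a) (hgen : Algebra.adjoin F {α} = ⊤)
    (hαF : α ∉ Set.range (algebraMap F E)) (hσα : σ α = -α) {z : E} (hz : σ z = z) :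
    z ∈ Set.range (algebraMap F E) := by
  obtain ⟨x, y, rfl⟩ := exists_eq_algebraMap_add_algebraMap_mul hα hgen z
  have hα0 : α ≠ 0 := fun h => hαF ⟨0, by rw [h, map_zero]⟩
  have h2y : algebraMap F E (2 * y) * α = 0 := by
    rw [map_add, map_mul, commutes, commutes, hσα] at hz
    rw [map_mul, map_ofNat]
    linear_combination -hz
  have hy : y = 0 := by simpa [hchar, hα0] using h2y
  exact ⟨x, by simp [hy]⟩

theorem algebraMap_norm_eq_mul_apply (hα : α ^ 2 = algebraMap F E a)
    (hgen : Algebra.adjoin F {α} = ⊤) (hαF : α ∉ Set.range (algebraMap F E))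
    (hσα : σ α = -α) (z : E) : algebraMap F E (Algebra.norm F z) = z * σ z := by
  obtain ⟨x, y, rfl⟩ := exists_eq_algebraMap_add_algebraMap_mul hα hgen z
  rw [Algebra.norm_algebraMap_add_algebraMap_mul hα hgen hαF, map_add, map_mul, commutes,
    commutes, hσα]
  simp only [map_sub, map_pow, map_mul]
  linear_combination (algebraMap F E y) ^ 2 * hα

theorem sq_mul_apply_eq_one (hσ : Function.Involutive σ) {e u : E} (he : e ≠ 0)
    (h : σ e = e * u ^ 2) : (u * σ u) ^ 2 = 1 := by
  have h' : e * 1 = e * (u * σ u) ^ 2 := by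
    calc e * 1 = σ (σ e) := by rw [mul_one, hσ e]
      _ = e * (u * σ u) ^ 2 := by rw [h, map_mul, map_pow, h]; ring
  exact (mul_left_cancel₀ he h').symm

theorem exists_eq_div_apply_of_mul_apply_eq_one (hα0 : α ≠ 0) (hσα : σ α = -α) {u : E}
    (hu : u * σ u = 1) : ∃ v ≠ 0, u = v / σ v := by
  by_cases h : 1 + u = 0
  · refine ⟨α, hα0, ?_⟩
    rw [hσα, div_neg, div_self hα0]
    linear_combination h
  · have hσv : σ (1 + u) ≠ 0 := by rwa [map_ne_zero_iff _ σ.injective]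
    refine ⟨1 + u, h, ?_⟩
    rw [eq_div_iff hσv, map_add, map_one]
    linear_combination hu

end AlgEquiv

end Field

theorem fixed_part_eq_image_of_base_general
    {F E : Type*} [Field F] [Field E] [Algebra F E]
    (hchar : (2 : F) ≠ 0)
    (a : F) (hns : ∀ f : F, f ^ 2 ≠ a)
    (α : E) (hα : α ^ 2 = algebraMap F E a)
    (hgen : Algebra.adjoin F {α} = ⊤)
    (σ : E ≃ₐ[F] E) (hσ : σ ≠ 1)
    (hneg : ¬ ∃ e : E, e ≠ 0 ∧ Algebra.norm F e = -1) :
    ∀ e : E, e ≠ 0 →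
      ((∃ u : E, u ≠ 0 ∧ σ e / e = u ^ 2) ↔
        ∃ f : F, ∃ u : E, f ≠ 0 ∧ u ≠ 0 ∧ e = algebraMap F E f * u ^ 2) := by
  have hαF : α ∉ Set.range (algebraMap F E) := by
    rintro ⟨f, rfl⟩
    exact hns f (FaithfulSMul.algebraMap_injective F E (by rw [map_pow, hα]))
  have hσα : σ α = -α := σ.apply_eq_neg_of_ne_one hα hgen hσ
  intro e he
  constructor
  · rintro ⟨u, hu0, hu⟩
    have hσe : σ e = e * u ^ 2 := by rw [← hu, mul_div_cancel₀ _ he]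
    rcases sq_eq_one_iff.mp (σ.sq_mul_apply_eq_one (σ.involutive_of_apply_eq_neg hgen hσα) he hσe)
      with hnorm | hnorm
    · obtain ⟨v, hv0, rfl⟩ := σ.exists_eq_div_apply_of_mul_apply_eq_one
        (fun h => hαF ⟨0, by rw [h, map_zero]⟩) hσα hnorm
      have hσv0 : σ v ≠ 0 := by rwa [map_ne_zero_iff _ σ.injective]
      have hfix : σ (e * v ^ 2) = e * v ^ 2 := by
        rw [map_mul, map_pow, hσe]
        field_simp
      obtain ⟨f, hf⟩ := σ.mem_range_algebraMap_of_apply_eq_self hchar hα hgen hαF hσα hfix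
      refine ⟨f, v⁻¹, ?_, inv_ne_zero hv0, ?_⟩
      · rintro rfl
        exact mul_ne_zero he (pow_ne_zero 2 hv0) (by rw [← hf, map_zero])
      · rw [hf]
        field_simp
    · refine (hneg ⟨u, hu0, FaithfulSMul.algebraMap_injective F E ?_⟩).elim
      rw [σ.algebraMap_norm_eq_mul_apply hα hgen hαF hσα, hnorm, map_neg, map_one]
  · rintro ⟨f, u, -, hu, rfl⟩
    refine ⟨σ u / u, div_ne_zero (by rwa [map_ne_zero_iff _ σ.injective]) hu, ?_⟩
    rw [map_mul, map_pow, AlgEquiv.commutes, mul_div_mul_left _ _ (left_ne_zero_of_mul he),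
      div_pow]

/-- Let `F` be a field of characteristic different from 2, `a ∈ F^×` a
non-square, `E = F(√a)`, `σ` the nontrivial element of `Gal(E/F)`.  Assume that
`-1 ∉ N_{E/F}(E^×)` and every `f ∈ F^×` can be written `f = N_{E/F}(e)·a^ε·g²`.  Then the
`G`-fixed part of `E^×/E^{×2}` is exactly the image of `F^×`: an element `e ∈ E^×` satisfies
`σ(e)/e ∈ E^{×2}` if and only if `e ∈ F^×·E^{×2}`. -/
theorem fixed_part_eq_image_of_base
    {F E : Type*} [Field F] [Field E] [Algebra F E]
    (hchar : (2 : F) ≠ 0)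
    (a : F) (ha : a ≠ 0) (hns : ∀ f : F, f ^ 2 ≠ a)
    (α : E) (hα : α ^ 2 = algebraMap F E a)
    (hgen : Algebra.adjoin F {α} = ⊤)
    (σ : E ≃ₐ[F] E) (hσ : σ ≠ 1)
    (hneg : ¬ ∃ e : E, e ≠ 0 ∧ Algebra.norm F e = -1)
    (hdecomp : ∀ f : F, f ≠ 0 → ∃ e : E, ∃ ε : Fin 2, ∃ g : F, e ≠ 0 ∧ g ≠ 0 ∧
      f = Algebra.norm F e * a ^ (ε : ℕ) * g ^ 2) :
    ∀ e : E, e ≠ 0 →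
      ((∃ u : E, u ≠ 0 ∧ σ e / e = u ^ 2) ↔
        ∃ f : F, ∃ u : E, f ≠ 0 ∧ u ≠ 0 ∧ e = algebraMap F E f * u ^ 2) :=
  fixed_part_eq_image_of_base_general hchar a hns α hα hgen σ hσ hneg
end
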